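/- Let (n_k) be a sequence of distinct positive integers and N ≥ 1. Then ∫₀¹ (∑_{k=1}^N ({n_k x} − 1/2))² dx = (1/12) ∑_{k=1}^N ∑_{ℓ=1}^N gcd(n_k, n_ℓ)²/(n_k n_ℓ). -/

import Mathlib

/-!
Expanding the square reduces the claim to Franel's formula
`∫₀¹ B(a x) B(b x) dx = gcd(a, b)² / (12 a b)` for the sawtooth `B x = {x} - 1/2`.
Since `B` is 1-periodic, the dilation `x ↦ gcd(a, b) x` reduces it to coprime `a, b`.
Cutting `[0, 1]` into `a b` intervals of length `1 / (a b)` turns the integral into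
`∫₀¹ ∑_{k < a b} B((t + k) / b) B((t + k) / a) dt`; by the Chinese remainder theorem the sum
factors as `(∑_{i < b} B((t + i) / b)) (∑_{j < a} B((t + j) / a))`, and the multiplication formula
`∑_{j < n} B(x + j / n) = B(n x)` collapses both factors to `B t`. What remains is
`∫₀¹ B² = 1 / 12`.
-/
open MeasureTheory Finset

noncomputable def sawtooth (x : ℝ) : ℝ := Int.fract x - 1 / 2

lemma sawtooth_add_natCast (x : ℝ) (m : ℕ) : sawtooth (x + m) = sawtooth x := by
  simp only [sawtooth, Int.fract_add_natCast]

lemma sawtooth_periodic : Function.Periodic sawtooth 1 := by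
  simpa using (sawtooth_add_natCast · 1)

lemma sawtooth_of_mem_Ico {x : ℝ} (hx : x ∈ Set.Ico 0 1) : sawtooth x = x - 1 / 2 := by
  rw [sawtooth, Int.fract_eq_self.mpr hx]

lemma abs_sawtooth_le (x : ℝ) : |sawtooth x| ≤ 1 / 2 := by
  rw [sawtooth, abs_le]
  constructor <;> linarith [Int.fract_nonneg x, Int.fract_lt_one x]

lemma measurable_sawtooth : Measurable sawtooth :=
  measurable_fract.sub measurable_const

lemma intervalIntegrable_sawtooth_comp_mul {f g : ℝ → ℝ} (hf : Measurable f) (hg : Measurable g)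
    (u v : ℝ) : IntervalIntegrable (fun x => sawtooth (f x) * sawtooth (g x)) volume u v := by
  refine IntervalIntegrable.mono_fun' (g := fun _ => 1 / 2 * (1 / 2)) intervalIntegrable_const
    ((measurable_sawtooth.comp hf).mul (measurable_sawtooth.comp hg)).aestronglyMeasurable
    (Filter.Eventually.of_forall fun x => ?_)
  simp only [norm_mul, Real.norm_eq_abs]
  exact mul_le_mul (abs_sawtooth_le _) (abs_sawtooth_le _) (abs_nonneg _) (by norm_num)

lemma sum_sawtooth_add_div_of_mem_Ico {n : ℕ} (hn : n ≠ 0) {y : ℝ} (hy : n * y ∈ Set.Ico 0 1) :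
    ∑ j ∈ range n, sawtooth (y + j / n) = sawtooth (n * y) := by
  have hn0 : (0 : ℝ) < n := by positivity
  have hterm : ∀ j ∈ range n, sawtooth (y + j / n) = y + j / n - 1 / 2 := by
    intro j hj
    have hj : (j : ℝ) + 1 ≤ n := by exact_mod_cast mem_range.mp hj
    apply sawtooth_of_mem_Ico
    constructor
    · have : 0 ≤ y := nonneg_of_mul_nonneg_right (by linarith [hy.1]) hn0
      positivity
    · rw [← mul_lt_mul_iff_of_pos_left hn0, mul_add, mul_div_cancel₀ _ hn0.ne', mul_one]
      linarith [hy.2]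
  have hgauss : ∑ j ∈ range n, (j : ℝ) = n * (n - 1) / 2 := by
    have := congrArg (Nat.cast (R := ℝ)) (sum_range_id_mul_two n)
    push_cast [Nat.cast_sub (Nat.one_le_iff_ne_zero.mpr hn)] at this
    linarith
  rw [sum_congr rfl hterm, sawtooth_of_mem_Ico hy, sum_sub_distrib, sum_add_distrib, ← sum_div,
    hgauss]
  simp only [sum_const, card_range, nsmul_eq_mul]
  field_simp
  ring

theorem sum_sawtooth_add_div {n : ℕ} (hn : n ≠ 0) (x : ℝ) :
    ∑ j ∈ range n, sawtooth (x + j / n) = sawtooth (n * x) := by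
  have hn' : (n : ℝ) ≠ 0 := Nat.cast_ne_zero.mpr hn
  set h : ℝ → ℝ := fun x => ∑ j ∈ range n, sawtooth (x + j / n) - sawtooth (n * x) with h_def
  -- shifting `x` by `1 / n` permutes the summands cyclically
  have h_periodic : Function.Periodic h (1 / n) := by
    intro x
    have hshift : ∀ j : ℕ, x + 1 / n + j / n = x + (j + 1 : ℕ) / n := by
      intro j; push_cast; ring
    have hcycle : ∑ j ∈ range n, sawtooth (x + (j + 1 : ℕ) / n)
        = ∑ j ∈ range n, sawtooth (x + j / n) := by
      have hlast : sawtooth (x + n / n) = sawtooth (x + (0 : ℕ) / n) := by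
        simpa [div_self hn'] using sawtooth_add_natCast x 1
      have := sum_range_succ' (fun j : ℕ => sawtooth (x + j / n)) n
      rw [sum_range_succ, hlast] at this
      linarith
    simp only [h_def, hshift, hcycle, mul_add, mul_one_div_cancel hn', sawtooth_periodic _]
  suffices h x = 0 by simpa [h_def, sub_eq_zero] using this
  have hy : n * (x - ⌊n * x⌋ * (1 / n)) ∈ Set.Ico (0 : ℝ) 1 := by
    rw [mul_sub, mul_left_comm, mul_one_div_cancel hn', mul_one, ← Int.fract]
    exact ⟨Int.fract_nonneg _, Int.fract_lt_one _⟩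
  rw [← h_periodic.sub_int_mul_eq ⌊n * x⌋, h_def, sub_eq_zero]
  exact sum_sawtooth_add_div_of_mem_Ico hn hy

theorem Finset.sum_range_mul_mul_of_coprime {R : Type*} [CommSemiring R] {a b : ℕ}
    (hab : a.Coprime b) {f g : ℕ → R} (hf : Function.Periodic f a) (hg : Function.Periodic g b) :
    ∑ k ∈ range (a * b), f k * g k = (∑ i ∈ range a, f i) * ∑ j ∈ range b, g j := by
  rcases eq_or_ne a 0 with rfl | ha
  · simp
  rcases eq_or_ne b 0 with rfl | hb
  · simp
  rw [sum_mul_sum, ← sum_product']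
  refine sum_nbij' (fun k => (k % a, k % b)) (fun p => Nat.chineseRemainder hab p.1 p.2)
    ?_ ?_ ?_ ?_ ?_
  · intro k _
    simp only [mem_product, mem_range]
    exact ⟨Nat.mod_lt _ (Nat.pos_of_ne_zero ha), Nat.mod_lt _ (Nat.pos_of_ne_zero hb)⟩
  · rintro ⟨i, j⟩ hij
    simp only [mem_product, mem_range] at hij
    exact mem_range.mpr (Nat.chineseRemainder_lt_mul hab i j ha hb)
  · intro k hk
    exact ((Nat.chineseRemainder_modEq_unique hab (Nat.mod_modEq k a).symm
      (Nat.mod_modEq k b).symm).symm.eq_of_lt_of_lt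
      (Nat.chineseRemainder_lt_mul hab _ _ ha hb) (mem_range.mp hk))
  · rintro ⟨i, j⟩ hij
    simp only [mem_product, mem_range] at hij
    have h := (Nat.chineseRemainder hab i j).prop
    simp only [Prod.mk.injEq]
    exact ⟨Eq.trans h.1 (Nat.mod_eq_of_lt hij.1), Eq.trans h.2 (Nat.mod_eq_of_lt hij.2)⟩
  · intro k _
    rw [hf.map_mod_nat, hg.map_mod_nat]

theorem integral_sawtooth_sq : ∫ x in (0 : ℝ)..1, sawtooth x ^ 2 = 1 / 12 := by
  have hIoo : ∀ f : ℝ → ℝ, ∫ x in (0 : ℝ)..1, f x = ∫ x in Set.Ioo (0 : ℝ) 1, f x := fun f => by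
    rw [intervalIntegral.integral_of_le zero_le_one, integral_Ioc_eq_integral_Ioo]
  rw [hIoo, setIntegral_congr_fun (g := fun x => (x - 1 / 2) ^ 2) measurableSet_Ioo
    (fun x hx => by simp only [sawtooth_of_mem_Ico (Set.Ioo_subset_Ico_self hx)]),
    ← hIoo (fun x => (x - 1 / 2) ^ 2), intervalIntegral.integral_comp_sub_right (· ^ 2)]
  norm_num [integral_pow]

theorem sum_intervalIntegral_comp_add_div {E : Type*} [NormedAddCommGroup E] [NormedSpace ℝ E]
    {F : ℝ → E} (hF : IntervalIntegrable F volume 0 1) {n : ℕ} (hn : n ≠ 0) :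
    ∑ k ∈ range n, ∫ t in (0 : ℝ)..1, F ((t + k) / n) = (n : ℝ) • ∫ x in (0 : ℝ)..1, F x := by
  have hn' : (n : ℝ) ≠ 0 := Nat.cast_ne_zero.mpr hn
  have hpiece : ∀ k : ℕ, ∫ t in (0 : ℝ)..1, F ((t + k) / n)
      = (n : ℝ) • ∫ x in (k : ℝ) / n..((k + 1 : ℕ) : ℝ) / n, F x := by
    intro k
    rw [intervalIntegral.integral_comp_add_right (fun y => F (y / n)),
      intervalIntegral.integral_comp_div F hn']
    push_cast
    ring_nf
  simp only [hpiece, ← smul_sum]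
  congr 1
  rw [intervalIntegral.sum_integral_adjacent_intervals (a := fun k : ℕ => (k : ℝ) / n)]
  · simp [div_self hn']
  · intro k hk
    have hmem : ∀ m ≤ n, (m : ℝ) / n ∈ Set.uIcc (0 : ℝ) 1 := fun m hm => by
      rw [Set.uIcc_of_le zero_le_one]
      exact ⟨by positivity, div_le_one_of_le₀ (by exact_mod_cast hm) (Nat.cast_nonneg n)⟩
    exact hF.mono_set (Set.uIcc_subset_uIcc (hmem k hk.le) (hmem (k + 1) hk))

theorem Function.Periodic.intervalIntegral_comp_natCast_mul {E : Type*} [NormedAddCommGroup E]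
    [NormedSpace ℝ E] {P : ℝ → E} (hP : Function.Periodic P 1)
    (hint : ∀ u v, IntervalIntegrable P volume u v) {d : ℕ} (hd : d ≠ 0) :
    ∫ x in (0 : ℝ)..1, P (d * x) = ∫ x in (0 : ℝ)..1, P x := by
  have hd' : (d : ℝ) ≠ 0 := Nat.cast_ne_zero.mpr hd
  have h := hP.intervalIntegral_add_zsmul_eq d 0 hint
  simp only [zero_add, natCast_zsmul, nsmul_eq_mul, mul_one] at h
  rw [intervalIntegral.integral_comp_mul_left _ hd', mul_zero, mul_one, h,
    ← Nat.cast_smul_eq_nsmul ℝ, smul_smul, inv_mul_cancel₀ hd', one_smul]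

lemma sawtooth_comp_natCast_mul_periodic (m : ℕ) :
    Function.Periodic (fun x => sawtooth (m * x)) 1 := by
  intro x
  simp only [mul_add, mul_one, sawtooth_add_natCast]

theorem integral_sawtooth_mul_sawtooth_of_coprime {a b : ℕ} (ha : a ≠ 0) (hb : b ≠ 0)
    (hab : a.Coprime b) :
    ∫ x in (0 : ℝ)..1, sawtooth (a * x) * sawtooth (b * x) = 1 / (12 * a * b) := by
  have ha' : (a : ℝ) ≠ 0 := Nat.cast_ne_zero.mpr ha
  have hb' : (b : ℝ) ≠ 0 := Nat.cast_ne_zero.mpr hb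
  have hsplit := sum_intervalIntegral_comp_add_div
    (intervalIntegrable_sawtooth_comp_mul (f := (a * ·)) (g := (b * ·))
      (by fun_prop) (by fun_prop) 0 1) (mul_ne_zero ha hb)
  have hperiodic : ∀ m : ℕ, m ≠ 0 → ∀ t : ℝ,
      Function.Periodic (fun k : ℕ => sawtooth (t / m + k / m)) m := by
    intro m hm t k
    simp only
    rw [Nat.cast_add, add_div, div_self (Nat.cast_ne_zero.mpr hm), ← add_assoc]
    exact sawtooth_periodic _
  have hcrt : ∀ t : ℝ, ∑ k ∈ range (a * b), sawtooth (a * ((t + k) / (a * b : ℕ)))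
      * sawtooth (b * ((t + k) / (a * b : ℕ))) = sawtooth t ^ 2 := by
    intro t
    have hterm : ∀ k : ℕ, sawtooth (a * ((t + k) / (a * b : ℕ)))
        * sawtooth (b * ((t + k) / (a * b : ℕ)))
        = sawtooth (t / b + k / b) * sawtooth (t / a + k / a) := by
      intro k
      push_cast
      congr 2 <;> field_simp
    rw [sum_congr rfl fun k _ => hterm k, mul_comm a b,
      sum_range_mul_mul_of_coprime hab.symm (hperiodic b hb t) (hperiodic a ha t),
      sum_sawtooth_add_div hb, sum_sawtooth_add_div ha, mul_div_cancel₀ _ hb',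
      mul_div_cancel₀ _ ha', sq]
  rw [← intervalIntegral.integral_finsetSum fun k _ => intervalIntegrable_sawtooth_comp_mul
    (by fun_prop) (by fun_prop) 0 1] at hsplit
  simp only [hcrt, integral_sawtooth_sq, smul_eq_mul] at hsplit
  push_cast at hsplit
  rw [← mul_div_cancel_left₀ (∫ x in (0 : ℝ)..1, sawtooth (a * x) * sawtooth (b * x))
    (mul_ne_zero ha' hb'), ← hsplit]
  ring

theorem integral_sawtooth_mul_sawtooth {a b : ℕ} (ha : a ≠ 0) (hb : b ≠ 0) :
    ∫ x in (0 : ℝ)..1, sawtooth (a * x) * sawtooth (b * x) = (a.gcd b : ℝ) ^ 2 / (12 * a * b) := by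
  obtain ⟨a', b', hcop, ha', hb'⟩ := Nat.exists_coprime a b
  set d := a.gcd b
  have hd : d ≠ 0 := Nat.gcd_ne_zero_left ha
  have hscale : ∀ x : ℝ, sawtooth (a * x) * sawtooth (b * x)
      = sawtooth (a' * (d * x)) * sawtooth (b' * (d * x)) := fun x => by
    rw [ha', hb']; push_cast; ring_nf
  have hP : Function.Periodic (fun y => sawtooth (a' * y) * sawtooth (b' * y)) 1 :=
    (sawtooth_comp_natCast_mul_periodic a').mul (sawtooth_comp_natCast_mul_periodic b')
  have hdilate := hP.intervalIntegral_comp_natCast_mul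
    (intervalIntegrable_sawtooth_comp_mul (by fun_prop) (by fun_prop)) hd
  have ha'0 : a' ≠ 0 := left_ne_zero_of_mul (ha' ▸ ha)
  have hb'0 : b' ≠ 0 := left_ne_zero_of_mul (hb' ▸ hb)
  simp only [hscale, hdilate, integral_sawtooth_mul_sawtooth_of_coprime ha'0 hb'0 hcop]
  rw [ha', hb']
  have : (d : ℝ) ≠ 0 := Nat.cast_ne_zero.mpr hd
  push_cast
  field_simp

theorem stmt_5_general (n : ℕ → ℕ) (hpos : ∀ k, 0 < n k)
    (N : ℕ) :
    ∫ x in (0:ℝ)..1, (∑ k ∈ Finset.Icc 1 N, (Int.fract ((n k : ℝ) * x) - 1/2)) ^ 2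
      = (1/12) * ∑ k ∈ Finset.Icc 1 N, ∑ l ∈ Finset.Icc 1 N,
          (Nat.gcd (n k) (n l) : ℝ) ^ 2 / ((n k : ℝ) * (n l : ℝ)) := by
  have hsq : ∀ x : ℝ, (∑ k ∈ Icc 1 N, (Int.fract ((n k : ℝ) * x) - 1 / 2)) ^ 2
      = ∑ k ∈ Icc 1 N, ∑ l ∈ Icc 1 N, sawtooth (n k * x) * sawtooth (n l * x) := fun x => by
    rw [sq, sum_mul_sum]; rfl
  have hint : ∀ k l, IntervalIntegrable (fun x => sawtooth (n k * x) * sawtooth (n l * x))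
      volume 0 1 := fun k l => intervalIntegrable_sawtooth_comp_mul (by fun_prop) (by fun_prop) 0 1
  simp only [hsq]
  rw [intervalIntegral.integral_finsetSum fun k _ => by
    simpa only [Finset.sum_fn] using IntervalIntegrable.sum _ fun l _ => hint k l]
  simp only [intervalIntegral.integral_finsetSum fun l _ => hint _ l, mul_sum]
  refine sum_congr rfl fun k _ => sum_congr rfl fun l _ => ?_
  rw [integral_sawtooth_mul_sawtooth (hpos k).ne' (hpos l).ne']
  ring

theorem stmt_5 (n : ℕ → ℕ) (hpos : ∀ k, 0 < n k) (hinj : Function.Injective n)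
    (N : ℕ) (hN : 1 ≤ N) :
    ∫ x in (0:ℝ)..1, (∑ k ∈ Finset.Icc 1 N, (Int.fract ((n k : ℝ) * x) - 1/2)) ^ 2
      = (1/12) * ∑ k ∈ Finset.Icc 1 N, ∑ l ∈ Finset.Icc 1 N,
          (Nat.gcd (n k) (n l) : ℝ) ^ 2 / ((n k : ℝ) * (n l : ℝ)) :=
  stmt_5_general n hpos N
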